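/- Suppose U_Xᵀ A_ff U_X is invertible, set c1 := U_X (U_Xᵀ A_ff U_X)^{-1} U_Xᵀ, and suppose U_Yᵀ (A_ss − A_sf c1 A_fs) U_Y is invertible, with c2 := U_Y (U_Yᵀ (A_ss − A_sf c1 A_fs) U_Y)^{-1} U_Yᵀ. Then there exists a unique pair (x_p*, y_p*) ∈ X × Y satisfying the projected equations Π_X(A_ff x_p* + A_fs y_p* − b1) = 0 and Π_Y(A_sf x_p* + A_ss y_p* − b2) = 0, and it is given by y_p* = c2 (b2 − A_sf c1 b1) and x_p* = c1 (b1 − A_fs y_p*). -/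

import Mathlib

/-!
Both projected equations are Galerkin conditions of the form `Π_U (A x - b) = 0` with
`x ∈ range U`. Writing `x = U w`, such a condition reads `(Uᵀ A U) w = Uᵀ b`, so when `Uᵀ A U`
is invertible its unique solution is `x = U (Uᵀ A U)⁻¹ Uᵀ b`. The first equation therefore
determines `x` from `y` as `c1 (b1 - A_fs y)`; substituting it into the second leaves a Galerkin
condition for the Schur complement `A_ss - A_sf c1 A_fs`, which determines `y`.
-/

open Matrix MeasureTheory Finset
open scoped BigOperators

noncomputable section
namespace TTSA

abbrev E (n : ℕ) : Type := EuclideanSpace ℝ (Fin n)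

def mv {k l : ℕ} (M : Matrix (Fin k) (Fin l) ℝ) (x : E l) : E k :=
  Matrix.toEuclideanLin M x

def specNorm {k l : ℕ} (M : Matrix (Fin k) (Fin l) ℝ) : ℝ :=
  ‖LinearMap.toContinuousLinearMap (Matrix.toEuclideanLin M)‖

def sigmaMin {k : ℕ} (M : Matrix (Fin k) (Fin k) ℝ) : ℝ :=
  sInf ((fun v : E k => ‖mv M v‖) '' {v | ‖v‖ = 1})

def resolvent {k l : ℕ} (U : Matrix (Fin k) (Fin l) ℝ) (A : Matrix (Fin k) (Fin k) ℝ) :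
    Matrix (Fin k) (Fin k) ℝ :=
  U * (Uᵀ * A * U)⁻¹ * Uᵀ

section mv

variable {k l p : ℕ}

lemma mv_mul (M : Matrix (Fin k) (Fin l) ℝ) (N : Matrix (Fin l) (Fin p) ℝ) (x : E p) :
    mv (M * N) x = mv M (mv N x) := by
  simp [mv, Matrix.toLpLin_apply, Matrix.mulVec_mulVec]

lemma mv_zero (M : Matrix (Fin k) (Fin l) ℝ) : mv M 0 = 0 :=
  map_zero (Matrix.toEuclideanLin M)

lemma mv_sub (M : Matrix (Fin k) (Fin l) ℝ) (x y : E l) : mv M (x - y) = mv M x - mv M y :=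
  map_sub (Matrix.toEuclideanLin M) x y

lemma sub_mv (M N : Matrix (Fin k) (Fin l) ℝ) (x : E l) : mv (M - N) x = mv M x - mv N x := by
  simp only [mv, map_sub, LinearMap.sub_apply]

end mv

section resolvent

variable {k l : ℕ} {U : Matrix (Fin k) (Fin l) ℝ} {A : Matrix (Fin k) (Fin k) ℝ}

lemma resolvent_mul_mul_self (hA : IsUnit (Uᵀ * A * U)) : resolvent U A * A * U = U := by
  rw [resolvent, Matrix.mul_assoc, Matrix.mul_assoc, Matrix.mul_assoc, ← Matrix.mul_assoc Uᵀ,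
    Matrix.nonsing_inv_mul _ ((Matrix.isUnit_iff_isUnit_det _).mp hA), Matrix.mul_one]

lemma proj_mul_mul_resolvent (hA : IsUnit (Uᵀ * A * U)) :
    U * Uᵀ * A * resolvent U A = U * Uᵀ := by
  rw [resolvent, show U * Uᵀ * A * (U * (Uᵀ * A * U)⁻¹ * Uᵀ) =
      U * ((Uᵀ * A * U) * (Uᵀ * A * U)⁻¹) * Uᵀ by simp only [Matrix.mul_assoc],
    Matrix.mul_nonsing_inv _ ((Matrix.isUnit_iff_isUnit_det _).mp hA), Matrix.mul_one]

lemma resolvent_mul_proj (hU : Uᵀ * U = 1) : resolvent U A * (U * Uᵀ) = resolvent U A := by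
  rw [resolvent, Matrix.mul_assoc, Matrix.mul_assoc, ← Matrix.mul_assoc Uᵀ, hU, Matrix.one_mul,
    ← Matrix.mul_assoc]

lemma mv_resolvent_mem_range (b : E k) : mv (resolvent U A) b ∈ Set.range (mv U) :=
  ⟨mv ((Uᵀ * A * U)⁻¹ * Uᵀ) b, by rw [← mv_mul, resolvent, Matrix.mul_assoc U]⟩

theorem mem_range_and_mv_proj_eq_zero_iff (hU : Uᵀ * U = 1) (hA : IsUnit (Uᵀ * A * U))
    (x b : E k) :
    (x ∈ Set.range (mv U) ∧ mv (U * Uᵀ) (mv A x - b) = 0) ↔ x = mv (resolvent U A) b := by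
  constructor
  · rintro ⟨⟨w, rfl⟩, h⟩
    have h' := congrArg (mv (resolvent U A)) h
    rw [← mv_mul, resolvent_mul_proj hU, mv_zero, mv_sub, ← mv_mul, ← mv_mul,
      resolvent_mul_mul_self hA] at h'
    exact sub_eq_zero.mp h'
  · rintro rfl
    refine ⟨mv_resolvent_mem_range b, ?_⟩
    rw [mv_sub, ← mv_mul, ← mv_mul, proj_mul_mul_resolvent hA, sub_self]

end resolvent

theorem projected_system_iff {n m d r : ℕ}
    {Aff : Matrix (Fin n) (Fin n) ℝ} {Afs : Matrix (Fin n) (Fin m) ℝ}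
    {Asf : Matrix (Fin m) (Fin n) ℝ} {Ass : Matrix (Fin m) (Fin m) ℝ}
    {UX : Matrix (Fin n) (Fin d) ℝ} {UY : Matrix (Fin m) (Fin r) ℝ}
    (hUX : UXᵀ * UX = 1) (hUY : UYᵀ * UY = 1)
    (h1 : IsUnit (UXᵀ * Aff * UX))
    (h2 : IsUnit (UYᵀ * (Ass - Asf * resolvent UX Aff * Afs) * UY))
    (b1 : E n) (b2 : E m) (x : E n) (y : E m) :
    ((x ∈ Set.range (mv UX) ∧ y ∈ Set.range (mv UY)) ∧
        mv (UX * UXᵀ) (mv Aff x + mv Afs y - b1) = 0 ∧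
        mv (UY * UYᵀ) (mv Asf x + mv Ass y - b2) = 0) ↔
      y = mv (resolvent UY (Ass - Asf * resolvent UX Aff * Afs))
          (b2 - mv (Asf * resolvent UX Aff) b1) ∧
        x = mv (resolvent UX Aff) (b1 - mv Afs y) := by
  set c1 := resolvent UX Aff
  have eq1 : mv Aff x + mv Afs y - b1 = mv Aff x - (b1 - mv Afs y) := by abel
  have eq2 : mv Asf (mv c1 (b1 - mv Afs y)) + mv Ass y - b2 =
      mv (Ass - Asf * c1 * Afs) y - (b2 - mv (Asf * c1) b1) := by
    simp only [mv_mul, mv_sub, sub_mv]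
    abel
  rw [and_and_and_comm, eq1, mem_range_and_mv_proj_eq_zero_iff hUX h1, and_comm]
  refine and_congr_left fun hx => ?_
  rw [hx, eq2, mem_range_and_mv_proj_eq_zero_iff hUY h2]

/-- existence, uniqueness and explicit form of the constrained
(projected) solution. Here `c1 = U_X (U_Xᵀ A_ff U_X)⁻¹ U_Xᵀ = resolvent U_X A_ff`
and `c2 = resolvent U_Y (A_ss - A_sf c1 A_fs)`. -/
theorem projected_system_unique_solution {n m d r : ℕ}
    (Aff : Matrix (Fin n) (Fin n) ℝ) (Afs : Matrix (Fin n) (Fin m) ℝ)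
    (Asf : Matrix (Fin m) (Fin n) ℝ) (Ass : Matrix (Fin m) (Fin m) ℝ)
    (b1 : E n) (b2 : E m)
    (UX : Matrix (Fin n) (Fin d) ℝ) (UY : Matrix (Fin m) (Fin r) ℝ)
    (hUX : UXᵀ * UX = 1) (hUY : UYᵀ * UY = 1)
    (h1 : IsUnit (UXᵀ * Aff * UX))
    (h2 : IsUnit (UYᵀ * (Ass - Asf * resolvent UX Aff * Afs) * UY)) :
    (∃! p : E n × E m,
        (p.1 ∈ Set.range (mv UX) ∧ p.2 ∈ Set.range (mv UY)) ∧
        mv (UX * UXᵀ) (mv Aff p.1 + mv Afs p.2 - b1) = 0 ∧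
        mv (UY * UYᵀ) (mv Asf p.1 + mv Ass p.2 - b2) = 0) ∧
    (∀ p : E n × E m,
        ((p.1 ∈ Set.range (mv UX) ∧ p.2 ∈ Set.range (mv UY)) ∧
         mv (UX * UXᵀ) (mv Aff p.1 + mv Afs p.2 - b1) = 0 ∧
         mv (UY * UYᵀ) (mv Asf p.1 + mv Ass p.2 - b2) = 0) →
        p.2 = mv (resolvent UY (Ass - Asf * resolvent UX Aff * Afs))
                (b2 - mv (Asf * resolvent UX Aff) b1) ∧
        p.1 = mv (resolvent UX Aff) (b1 - mv Afs p.2)) := by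
  have hsys := projected_system_iff hUX hUY h1 h2 b1 b2
  set y₀ := mv (resolvent UY (Ass - Asf * resolvent UX Aff * Afs))
    (b2 - mv (Asf * resolvent UX Aff) b1)
  refine ⟨⟨(mv (resolvent UX Aff) (b1 - mv Afs y₀), y₀), (hsys _ _).2 ⟨rfl, rfl⟩, ?_⟩,
    fun p => (hsys p.1 p.2).1⟩
  intro p hp
  obtain ⟨hy, hx⟩ := (hsys p.1 p.2).1 hp
  exact Prod.ext (hx.trans (by rw [hy])) hy

end TTSA
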